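/- arXiv:2512.08399 — 6 statements merged into one kernel-verified Lean document; each statement's English description precedes it below -/
import Mathlib

section
/- Let F be a field of characteristic 0, n a positive integer, r ≥ 1, and write n = ar + b with 0 ≤ b ≤ r−1. Then the Jordan canonical form of N_nʳ (the r-th power of the n×n nilpotent Jordan block) consists of exactly r − b nilpotent Jordan blocks of size a and b nilpotent Jordan blocks of size a+1. -/
open Matrix

lemma pow_shift {F : Type*} [Field F] {n : ℕ}
    (N : Matrix (Fin n) (Fin n) F)
    (hN : N = Matrix.of fun (i j : Fin n) => if (i : ℕ) + 1 = (j : ℕ) then (1 : F) else 0)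
    (m : ℕ) :
    N ^ m = Matrix.of fun (i j : Fin n) => if (i : ℕ) + m = (j : ℕ) then (1 : F) else 0 := by
  induction m with
  | zero =>
    ext i j
    simp [Matrix.one_apply, Fin.ext_iff]
  | succ m ih =>
    rw [pow_succ, ih, hN]
    ext i j
    simp only [Matrix.mul_apply, Matrix.of_apply]
    by_cases h : (i : ℕ) + m < n
    · have : ∀ l : Fin n, ((i : ℕ) + m = (l : ℕ)) ↔ l = ⟨(i : ℕ) + m, h⟩ := by
        intro l; simp [Fin.ext_iff, eq_comm]
      simp only [this, ite_mul, one_mul, zero_mul]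
      rw [Finset.sum_ite_eq' Finset.univ]
      simp [Nat.add_assoc]
    · have h1 : ∀ l : Fin n, (if (i : ℕ) + m = (l : ℕ) then (1:F) else 0) = 0 := by
        intro l
        rw [if_neg]
        intro hc
        exact h (hc ▸ l.isLt)
      simp only [h1, zero_mul, Finset.sum_const_zero]
      rw [if_neg]
      intro hc
      have := j.isLt
      omega

lemma rank_shift {F : Type*} [Field F] (n m : ℕ) :
    (Matrix.of fun (i j : Fin n) => if (i : ℕ) + m = (j : ℕ) then (1 : F) else 0).rank
      = n - m := by
  classical
  set M : Matrix (Fin n) (Fin n) F :=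
    Matrix.of fun (i j : Fin n) => if (i : ℕ) + m = (j : ℕ) then (1 : F) else 0 with hM
  set w : Fin n → F := fun i => if (i : ℕ) + m < n then (1 : F) else 0 with hw
  set D : Matrix (Fin n) (Fin n) F := Matrix.diagonal w with hD
  have hDM : D * M = M := by
    ext i j
    rw [hD, Matrix.diagonal_mul, hw]
    by_cases h : (i : ℕ) + m < n
    · simp [h]
    · have : M i j = 0 := by
        rw [hM]
        simp only [Matrix.of_apply]
        rw [if_neg]
        have := j.isLt
        omega
      simp [h, this]
  have hMMT : M * Mᵀ = D := by
    ext i k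
    simp only [Matrix.mul_apply, Matrix.transpose_apply, hM, Matrix.of_apply, hD, hw,
      Matrix.diagonal_apply]
    by_cases h : (i : ℕ) + m < n
    · have heq : ∀ l : Fin n, ((i : ℕ) + m = (l : ℕ)) ↔ l = ⟨(i : ℕ) + m, h⟩ := by
        intro l; simp [Fin.ext_iff, eq_comm]
      simp only [heq, ite_mul, one_mul, zero_mul]
      rw [Finset.sum_ite_eq' Finset.univ]
      simp only [Finset.mem_univ, if_true]
      by_cases hik : i = k
      · subst hik; simp [h]
      · rw [if_neg, if_neg hik]
        have : (i : ℕ) ≠ (k : ℕ) := fun hc => hik (Fin.ext hc)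
        omega
    · have h1 : ∀ l : Fin n, (if (i : ℕ) + m = (l : ℕ) then (1:F) else 0) = 0 := by
        intro l
        rw [if_neg]
        intro hc
        exact h (hc ▸ l.isLt)
      simp only [h1, zero_mul, Finset.sum_const_zero]
      by_cases hik : i = k
      · subst hik; simp [h]
      · rw [if_neg hik]
  have h1 : M.rank ≤ D.rank := by
    conv_lhs => rw [← hDM]
    exact Matrix.rank_mul_le_left D M
  have h2 : D.rank ≤ M.rank := by
    conv_lhs => rw [← hMMT]
    exact Matrix.rank_mul_le_left M Mᵀ
  have hDrank : D.rank = n - m := by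
    rw [hD, Matrix.rank_diagonal]
    have e : {i : Fin n // w i ≠ 0} ≃ Fin (n - m) :=
      { toFun := fun x => ⟨x.1.1, by
          have h1 := x.1.isLt
          have h2 : (if ((x.1 : Fin n) : ℕ) + m < n then (1:F) else 0) ≠ 0 := x.2
          by_cases h : ((x.1 : Fin n) : ℕ) + m < n
          · omega
          · rw [if_neg h] at h2; exact absurd rfl h2⟩
        invFun := fun y => ⟨⟨y.1, by have := y.isLt; omega⟩, by
          have hy := y.isLt
          show (if (y : ℕ) + m < n then (1:F) else 0) ≠ 0
          rw [if_pos (by omega)]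
          exact one_ne_zero⟩
        left_inv := fun x => rfl
        right_inv := fun y => rfl }
    rw [Fintype.card_congr e, Fintype.card_fin]
  omega

theorem jordan_form_of_power_of_nilpotent_jordan_block
    {F : Type*} [Field F] [CharZero F] {n a b r : ℕ}
    (hn : 0 < n) (hr : 1 ≤ r) (hb : b < r) (hnab : n = a * r + b)
    (N : Matrix (Fin n) (Fin n) F)
    (hN : N = Matrix.of fun (i j : Fin n) => if (i : ℕ) + 1 = (j : ℕ) then (1 : F) else 0) :
    ∀ k : ℕ, ((N ^ r) ^ k).rank = (r - b) * (a - min a k) + b * ((a + 1) - min (a + 1) k) := by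
  intro k
  rw [← pow_mul, pow_shift N hN (r * k), rank_shift]
  subst hnab
  rcases le_or_gt k a with hk | hk
  · rw [min_eq_right hk, min_eq_right (by omega : k ≤ a + 1)]
    have h1 : r * k ≤ a * r + b := by
      calc r * k ≤ r * a := Nat.mul_le_mul le_rfl hk
        _ = a * r := by ring
        _ ≤ a * r + b := Nat.le_add_right _ _
    zify [h1, hk, (by omega : k ≤ a + 1), hb.le]
    ring
  · rw [min_eq_left hk.le, min_eq_left (by omega : a + 1 ≤ k)]
    have h4 : a * r + b ≤ r * k := by
      calc a * r + b ≤ a * r + r := by omega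
        _ = r * (a + 1) := by ring
        _ ≤ r * k := Nat.mul_le_mul le_rfl hk
    rw [Nat.sub_eq_zero_of_le h4]
    simp
end

section
/- Let F be a field of characteristic 0, f ∈ F[w] a polynomial, and define the bivariate polynomial p(x,y) by (x − y)·p(x,y) = f(x) − f(y). Then for every pair of natural numbers (β,γ), the Hasse derivatives satisfy (∂̂_x − ∂̂_y) ∂̂_{x^β y^γ} p(x,y) = (x − y) · ∂̂_x ∂̂_y ∂̂_{x^β y^γ} p(x,y). -/
/-!
Apply `∂̂_{x^(β+1)} ∂̂_{y^(γ+1)}` to `(x - y) p = f(x) - f(y)`. The right side vanishes, since each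
of its terms is killed by one of the two derivatives. On the left, `x - y` has constant partial
derivatives `±1`, so the Leibniz rule for Hasse derivatives collapses to
`∂̂^(n+1) ((x - y) q) = (x - y) ∂̂^(n+1) q ± ∂̂^n q`; applying it once in `y` and once in `x` leaves
exactly the claimed identity.
-/

open MvPolynomial Nat

namespace Derivation

section Iterate

variable {R A : Type*} [CommSemiring R] [CommSemiring A] [Algebra R A] (D : Derivation R A A)

theorem iterate_succ_mul_of_apply_apply_eq_zero {a : A} (ha : D (D a) = 0) (n : ℕ) (q : A) :
    (⇑D)^[n + 1] (a * q) = a * (⇑D)^[n + 1] q + (n + 1) • (D a * (⇑D)^[n] q) := by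
  induction n with
  | zero => simp [leibniz, mul_comm]
  | succ n ih =>
    rw [Function.iterate_succ_apply' _ (n + 1), ih, Function.iterate_succ_apply' _ (n + 1),
      Function.iterate_succ_apply' _ n]
    simp only [map_add, map_nsmul, leibniz, ha, smul_eq_mul]
    simp only [nsmul_eq_mul]
    push_cast
    ring

theorem iterate_apply_aeval_of_apply_eq_one {x : A} (hx : D x = 1) (n : ℕ) (f : Polynomial R) :
    (⇑D)^[n] (Polynomial.aeval x f) = Polynomial.aeval x (Polynomial.derivative^[n] f) := by
  induction n generalizing f with
  | zero => rfl
  | succ n ih => simp [ih, hx]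

end Iterate

section Hasse

variable {F A : Type*} [Field F] [CommRing A] [Algebra F A] (D : Derivation F A A)

def hasseDeriv (n : ℕ) : Module.End F A := (n ! : F)⁻¹ • (D : Module.End F A) ^ n

theorem hasseDeriv_apply (n : ℕ) (q : A) : D.hasseDeriv n q = (n ! : F)⁻¹ • (⇑D)^[n] q := by
  simp [hasseDeriv, Module.End.pow_apply]

theorem hasseDeriv_succ_apply_of_apply_eq_zero {q : A} (hq : D q = 0) (n : ℕ) :
    D.hasseDeriv (n + 1) q = 0 := by
  rw [hasseDeriv_apply, Function.iterate_succ_apply, hq, iterate_map_zero, smul_zero]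

theorem hasseDeriv_apply_aeval_of_apply_eq_one [CharZero F] {x : A} (hx : D x = 1) (n : ℕ)
    (f : Polynomial F) :
    D.hasseDeriv n (Polynomial.aeval x f) = Polynomial.aeval x (Polynomial.hasseDeriv n f) := by
  rw [hasseDeriv_apply, D.iterate_apply_aeval_of_apply_eq_one hx,
    ← Polynomial.factorial_smul_hasseDeriv, LinearMap.smul_apply, map_nsmul,
    ← Nat.cast_smul_eq_nsmul F, smul_smul, inv_mul_cancel₀ (by exact_mod_cast n.factorial_ne_zero),
    one_smul]

theorem hasseDeriv_succ_mul_of_apply_apply_eq_zero [CharZero F] {a : A} (ha : D (D a) = 0)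
    (n : ℕ) (q : A) :
    D.hasseDeriv (n + 1) (a * q) = a * D.hasseDeriv (n + 1) q + D a * D.hasseDeriv n q := by
  simp only [hasseDeriv_apply, D.iterate_succ_mul_of_apply_apply_eq_zero ha, smul_add,
    mul_smul_comm, ← Nat.cast_smul_eq_nsmul F, smul_smul]
  congr 2
  rw [factorial_succ, cast_mul, mul_inv_rev, mul_assoc,
    inv_mul_cancel₀ (cast_ne_zero.mpr n.succ_ne_zero), mul_one]

end Hasse

end Derivation

theorem frechet_hasse_derivative_identity
    {F : Type*} [Field F] [CharZero F]
    (f : Polynomial F) (p : MvPolynomial (Fin 2) F)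
    (hp : (X 0 - X 1) * p =
        Polynomial.aeval (X 0 : MvPolynomial (Fin 2) F) f -
        Polynomial.aeval (X 1 : MvPolynomial (Fin 2) F) f)
    (H : ℕ → ℕ → MvPolynomial (Fin 2) F → MvPolynomial (Fin 2) F)
    (hH : ∀ β γ q, H β γ q =
        ((β.factorial * γ.factorial : F))⁻¹ •
          ((fun r => pderiv (0 : Fin 2) r)^[β] ((fun r => pderiv (1 : Fin 2) r)^[γ] q))) :
    ∀ β γ : ℕ,
      H (β + 1) γ p - H β (γ + 1) p = (X 0 - X 1) * H (β + 1) (γ + 1) p := by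
  intro β γ
  set Dx := pderiv (R := F) (0 : Fin 2)
  set Dy := pderiv (R := F) (1 : Fin 2)
  have hH_hasse : ∀ β γ, H β γ p = Dx.hasseDeriv β (Dy.hasseDeriv γ p) := by
    intro β γ
    simp only [hH, Derivation.hasseDeriv_apply, map_smul, smul_smul, mul_inv, mul_comm]
  have hDx : Dx (X 0 - X 1) = 1 := by simp [Dx]
  have hDy : Dy (X 0 - X 1) = -1 := by simp [Dy]
  have hvanish : Dx.hasseDeriv (β + 1) (Dy.hasseDeriv (γ + 1) ((X 0 - X 1) * p)) = 0 := by
    rw [hp, map_sub, map_sub, Dy.hasseDeriv_succ_apply_of_apply_eq_zero (by simp [Dy]),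
      map_zero, Dy.hasseDeriv_apply_aeval_of_apply_eq_one (pderiv_X_self 1),
      Dx.hasseDeriv_succ_apply_of_apply_eq_zero (by simp [Dx]), sub_zero]
  rw [Dy.hasseDeriv_succ_mul_of_apply_apply_eq_zero (by simp [hDy]), hDy, neg_one_mul, map_add,
    map_neg, Dx.hasseDeriv_succ_mul_of_apply_apply_eq_zero (by simp [hDx]), hDx, one_mul] at hvanish
  rw [hH_hasse, hH_hasse, hH_hasse]
  linear_combination -hvanish
end

section
/- Let F be a field of characteristic 0, let λ, μ ∈ F, and let m, n be positive integers. Let p(x,y) be a non-constant bivariate polynomial with local degree d ≥ 1 at (λ,μ), meaning all Hasse derivatives of p of order between 1 and d−1 vanish at (λ,μ) and some Hasse derivative of order d does not. Let Z = P(J_m(λ), J_n(μ)) − p(λ,μ)·I_{mn}, where P(X,Y) = ∑ a_{ij}(Xⁱ ⊗ Yʲ) and J_k(ν) = νI_k + N_k. Then Zᵏ = 0 for every integer k ≥ (m + n − 1)/d; in particular every Jordan block of P(J_m(λ), J_n(μ)) has size at most ⌈(m+n−1)/d⌉. -/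
open Kronecker MvPolynomial Finset

/-!
Write `J_m(λ) ⊗ 1 = λ + X` and `1 ⊗ J_n(μ) = μ + Y`, where `X = N_m ⊗ 1` and `Y = 1 ⊗ N_n` are
commuting nilpotents with `X ^ m = Y ^ n = 0`. Taylor expansion at `(λ, μ)` gives
`P(J_m(λ), J_n(μ)) = ∑ β γ, (∂̂_{x^β y^γ} p)(λ, μ) • X ^ β * Y ^ γ`, so by the local degree
hypothesis `Z` lies in the span of the monomials `X ^ β * Y ^ γ` with `β + γ ≥ d`. These spans
form a multiplicative filtration, hence `Z ^ k` lies in degree `≥ d * k`, and every monomial of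
degree `≥ m + n - 1` vanishes.
-/

section Filtration

variable {R A : Type*} [CommSemiring R] [Ring A] [Algebra R A]

variable (R) in
def monomialFiltration (X Y : A) (t : ℕ) : Submodule R A :=
  Submodule.span R {M | ∃ β γ : ℕ, t ≤ β + γ ∧ M = X ^ β * Y ^ γ}

variable {X Y : A}

theorem monomialFiltration_mul_le (hXY : Commute X Y) (s t : ℕ) :
    monomialFiltration R X Y s * monomialFiltration R X Y t ≤
      monomialFiltration R X Y (s + t) := by
  rw [monomialFiltration, monomialFiltration, Submodule.span_mul_span, Submodule.span_le]
  rintro _ ⟨_, ⟨β, γ, hβγ, rfl⟩, _, ⟨β', γ', hβγ', rfl⟩, rfl⟩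
  refine Submodule.subset_span ⟨β + β', γ + γ', by omega, ?_⟩
  rw [pow_add, pow_add]
  exact (hXY.pow_pow β' γ).symm.mul_mul_mul_comm _ _

theorem pow_mem_monomialFiltration (hXY : Commute X Y) {d : ℕ} {Z : A}
    (hZ : Z ∈ monomialFiltration R X Y d) (k : ℕ) : Z ^ k ∈ monomialFiltration R X Y (d * k) := by
  induction k with
  | zero => exact Submodule.subset_span ⟨0, 0, le_rfl, by simp⟩
  | succ k ih =>
    rw [pow_succ, Nat.mul_succ]
    exact monomialFiltration_mul_le hXY _ _ (Submodule.mul_mem_mul ih hZ)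

theorem monomialFiltration_eq_bot {m n t : ℕ} (hX : X ^ m = 0) (hY : Y ^ n = 0)
    (ht : m + n - 1 ≤ t) : monomialFiltration R X Y t = ⊥ := by
  refine (Submodule.span_eq_bot).2 ?_
  rintro _ ⟨β, γ, hβγ, rfl⟩
  rcases le_or_gt m β with hβ | hβ
  · rw [pow_eq_zero_of_le hβ hX, zero_mul]
  · rw [pow_eq_zero_of_le (by omega : n ≤ γ) hY, mul_zero]

theorem sum_smul_sub_mem_monomialFiltration {M M' d : ℕ} (hM : 0 < M) (hM' : 0 < M')
    (c : ℕ → ℕ → R) (hc : ∀ β γ, 1 ≤ β + γ → β + γ < d → c β γ = 0) :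
    ∑ β ∈ range M, ∑ γ ∈ range M', c β γ • (X ^ β * Y ^ γ) - c 0 0 • 1 ∈
      monomialFiltration R X Y d := by
  have h00 : ((0, 0) : ℕ × ℕ) ∈ range M ×ˢ range M' := by simp [hM, hM']
  rw [← sum_product' (f := fun β γ => c β γ • (X ^ β * Y ^ γ)), ← add_sum_erase _ _ h00]
  simp only [pow_zero, mul_one, add_sub_cancel_left]
  refine Submodule.sum_mem _ fun βγ hβγ => ?_
  rcases lt_or_ge (βγ.1 + βγ.2) d with hlt | hge
  · have hne : βγ ≠ (0, 0) := (mem_erase.1 hβγ).1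
    rw [hc _ _ (by contrapose! hne; ext <;> simp <;> omega) hlt, zero_smul]
    exact Submodule.zero_mem _
  · exact Submodule.smul_mem _ _ (Submodule.subset_span ⟨_, _, hge, rfl⟩)

end Filtration

theorem add_pow_eq_sum_range_of_pow_eq_zero {R A : Type*} [CommSemiring R] [Semiring A]
    [Algebra R A] (c : R) {N : A} {M : ℕ} (hN : N ^ M = 0) (a : ℕ) :
    (c • 1 + N) ^ a = ∑ β ∈ range M, ((a.choose β : R) * c ^ (a - β)) • N ^ β := by
  have hterm : ∀ β, N ^ β * (c • 1) ^ (a - β) * (a.choose β : A) =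
      ((a.choose β : R) * c ^ (a - β)) • N ^ β := fun β => by
    rw [smul_pow, one_pow, mul_smul_comm, mul_one, smul_mul_assoc, ← Nat.cast_comm, ← nsmul_eq_mul,
      ← Nat.cast_smul_eq_nsmul R, smul_smul, mul_comm]
  have htail : ∀ β ≥ a + 1, ((a.choose β : R) * c ^ (a - β)) • N ^ β = 0 := fun β hβ => by
    rw [Nat.choose_eq_zero_of_lt (by omega), Nat.cast_zero, zero_mul, zero_smul]
  have hnil : ∀ β ≥ M, ((a.choose β : R) * c ^ (a - β)) • N ^ β = 0 := fun β hβ => by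
    rw [pow_eq_zero_of_le hβ hN, smul_zero]
  rw [add_comm, ((Commute.one_right N).smul_right c).add_pow, sum_congr rfl fun β _ => hterm β,
    ← eventually_constant_sum htail (Nat.le_add_right _ M),
    eventually_constant_sum hnil (Nat.le_add_left _ _)]

theorem iterate_pderiv_monomial {σ R : Type*} [CommSemiring R] (i : σ) (k : ℕ) (u : σ →₀ ℕ)
    (c : R) : (fun r => pderiv i r)^[k] (monomial u c) =
      monomial (u - Finsupp.single i k) (c * (u i).descFactorial k) := by
  classical
  induction k with
  | zero => simp
  | succ k ih =>
    rw [Function.iterate_succ_apply', ih, pderiv_monomial, tsub_tsub, ← Finsupp.single_add,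
      Finsupp.tsub_apply, Finsupp.single_eq_same, Nat.descFactorial_succ, Nat.cast_mul, mul_assoc,
      mul_comm ((u i - k : ℕ) : R)]

section Hasse

variable {F : Type*} [Field F]

noncomputable def bivariateHasseDeriv (β γ : ℕ) :
    MvPolynomial (Fin 2) F →ₗ[F] MvPolynomial (Fin 2) F :=
  ((β.factorial * γ.factorial : F))⁻¹ •
    ((pderiv (R := F) (0 : Fin 2)).toLinearMap ^ β * (pderiv (R := F) (1 : Fin 2)).toLinearMap ^ γ)

theorem bivariateHasseDeriv_apply (β γ : ℕ) (q : MvPolynomial (Fin 2) F) :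
    bivariateHasseDeriv β γ q = ((β.factorial * γ.factorial : F))⁻¹ •
      ((fun r => pderiv (0 : Fin 2) r)^[β] ((fun r => pderiv (1 : Fin 2) r)^[γ] q)) := by
  simp [bivariateHasseDeriv, Module.End.coe_pow]

theorem bivariateHasseDeriv_zero_zero (q : MvPolynomial (Fin 2) F) :
    bivariateHasseDeriv 0 0 q = q := by
  simp [bivariateHasseDeriv]

variable [CharZero F]

theorem eval_bivariateHasseDeriv_monomial (x : Fin 2 → F) (β γ : ℕ) (u : Fin 2 →₀ ℕ) (c : F) :
    eval x (bivariateHasseDeriv β γ (monomial u c)) =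
      c * ((u 0).choose β * x 0 ^ (u 0 - β)) * ((u 1).choose γ * x 1 ^ (u 1 - γ)) := by
  rw [bivariateHasseDeriv_apply, iterate_pderiv_monomial, iterate_pderiv_monomial, smul_eq_C_mul,
    map_mul, eval_C, eval_monomial, Finsupp.prod_fintype _ _ fun i => pow_zero _, Fin.prod_univ_two]
  simp only [Finsupp.tsub_apply, Finsupp.single_apply, Nat.descFactorial_eq_factorial_mul_choose,
    Nat.cast_mul, one_ne_zero, zero_ne_one, if_true, if_false, tsub_zero]
  have hβ : (β.factorial : F) ≠ 0 := Nat.cast_ne_zero.2 β.factorial_ne_zero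
  have hγ : (γ.factorial : F) ≠ 0 := Nat.cast_ne_zero.2 γ.factorial_ne_zero
  field_simp

theorem eval_bivariateHasseDeriv (x : Fin 2 → F) (β γ : ℕ) (p : MvPolynomial (Fin 2) F) :
    eval x (bivariateHasseDeriv β γ p) = ∑ u ∈ p.support,
      coeff u p * ((u 0).choose β * x 0 ^ (u 0 - β)) * ((u 1).choose γ * x 1 ^ (u 1 - γ)) := by
  conv_lhs => rw [p.as_sum]
  simp only [map_sum, eval_bivariateHasseDeriv_monomial]

end Hasse

section Taylor

variable {F A : Type*} [Field F] [Ring A] [Algebra F A]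

noncomputable def bivariateEval (p : MvPolynomial (Fin 2) F) (X Y : A) : A :=
  ∑ u ∈ p.support, coeff u p • (X ^ u 0 * Y ^ u 1)

variable [CharZero F]

theorem bivariateEval_add_nilpotent {X Y : A} {M M' : ℕ} (hX : X ^ M = 0) (hY : Y ^ M' = 0)
    (p : MvPolynomial (Fin 2) F) (x : Fin 2 → F) :
    bivariateEval p (x 0 • 1 + X) (x 1 • 1 + Y) =
      ∑ β ∈ range M, ∑ γ ∈ range M', eval x (bivariateHasseDeriv β γ p) • (X ^ β * Y ^ γ) := by
  simp only [bivariateEval, add_pow_eq_sum_range_of_pow_eq_zero _ hX,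
    add_pow_eq_sum_range_of_pow_eq_zero _ hY, sum_mul_sum, smul_mul_smul, smul_sum, smul_smul,
    eval_bivariateHasseDeriv, sum_smul]
  rw [sum_comm]
  refine sum_congr rfl fun β _ => ?_
  rw [sum_comm]
  refine sum_congr rfl fun γ _ => sum_congr rfl fun u _ => ?_
  congr 1
  ring

end Taylor

section Jordan

variable {R : Type*} [CommSemiring R] {m : ℕ}

def shiftMatrix (m : ℕ) : Matrix (Fin m) (Fin m) R :=
  Matrix.of fun i j => if (i : ℕ) + 1 = j then 1 else 0

theorem shiftMatrix_pow_apply (k : ℕ) (i j : Fin m) :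
    (shiftMatrix m ^ k : Matrix (Fin m) (Fin m) R) i j = if (i : ℕ) + k = j then 1 else 0 := by
  induction k generalizing j with
  | zero => simp [Matrix.one_apply, Fin.ext_iff]
  | succ k ih =>
    rw [pow_succ, Matrix.mul_apply]
    simp only [ih]
    simp only [shiftMatrix, Matrix.of_apply, ite_mul, one_mul, zero_mul]
    by_cases h : (i : ℕ) + k < m
    · rw [sum_eq_single ⟨(i : ℕ) + k, h⟩ (fun l _ hl => if_neg fun e => hl (Fin.ext e.symm))
        (by simp)]
      simp [add_assoc]
    · rw [sum_eq_zero fun l _ => if_neg (by omega), if_neg (by omega)]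

theorem shiftMatrix_pow_self : (shiftMatrix m ^ m : Matrix (Fin m) (Fin m) R) = 0 := by
  ext i j
  rw [shiftMatrix_pow_apply, Matrix.zero_apply, if_neg (by omega)]

theorem jordanBlock_eq_smul_one_add_shiftMatrix (c : R) :
    (Matrix.of fun i j : Fin m => if i = j then c else if (i : ℕ) + 1 = j then 1 else 0) =
      c • 1 + shiftMatrix m := by
  ext i j
  rcases eq_or_ne i j with rfl | hij
  · simp [shiftMatrix]
  · simp [shiftMatrix, hij, Matrix.one_apply_ne hij]

variable {ι κ : Type*} [Fintype ι] [DecidableEq ι] [Fintype κ] [DecidableEq κ]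

theorem kronecker_one_pow (A : Matrix ι ι R) (a : ℕ) :
    (A ⊗ₖ (1 : Matrix κ κ R)) ^ a = (A ^ a) ⊗ₖ 1 := by
  induction a with
  | zero => simp
  | succ a ih => rw [pow_succ, ih, ← Matrix.mul_kronecker_mul, pow_succ, one_mul]

theorem one_kronecker_pow (B : Matrix κ κ R) (b : ℕ) :
    ((1 : Matrix ι ι R) ⊗ₖ B) ^ b = 1 ⊗ₖ (B ^ b) := by
  induction b with
  | zero => simp
  | succ b ih => rw [pow_succ, ih, ← Matrix.mul_kronecker_mul, pow_succ, one_mul]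

theorem pow_kronecker_pow (A : Matrix ι ι R) (B : Matrix κ κ R) (a b : ℕ) :
    (A ^ a) ⊗ₖ (B ^ b) = (A ⊗ₖ 1) ^ a * (1 ⊗ₖ B) ^ b := by
  rw [kronecker_one_pow, one_kronecker_pow, ← Matrix.mul_kronecker_mul, mul_one, one_mul]

theorem commute_kronecker_one_one_kronecker (A : Matrix ι ι R) (B : Matrix κ κ R) :
    Commute (A ⊗ₖ 1) (1 ⊗ₖ B) := by
  rw [Commute, SemiconjBy, ← Matrix.mul_kronecker_mul, ← Matrix.mul_kronecker_mul]
  simp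

end Jordan

theorem nilpotency_index_bound_local_degree_general
    {F : Type*} [Field F] [CharZero F] {m n : ℕ} (hm : 0 < m) (hn : 0 < n)
    (lam mu : F) (p : MvPolynomial (Fin 2) F) (d : ℕ)
    (H : ℕ → ℕ → MvPolynomial (Fin 2) F → MvPolynomial (Fin 2) F)
    (hH : ∀ β γ q, H β γ q =
        ((β.factorial * γ.factorial : F))⁻¹ •
          ((fun r => pderiv (0 : Fin 2) r)^[β] ((fun r => pderiv (1 : Fin 2) r)^[γ] q)))
    (hlow : ∀ β γ : ℕ, 1 ≤ β + γ → β + γ < d →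
        MvPolynomial.eval (fun i : Fin 2 => if i = 0 then lam else mu) (H β γ p) = 0)
    (Jm : Matrix (Fin m) (Fin m) F)
    (hJm : Jm = Matrix.of fun (i j : Fin m) =>
        if i = j then lam else if (i : ℕ) + 1 = (j : ℕ) then 1 else 0)
    (Jn : Matrix (Fin n) (Fin n) F)
    (hJn : Jn = Matrix.of fun (i j : Fin n) =>
        if i = j then mu else if (i : ℕ) + 1 = (j : ℕ) then 1 else 0)
    (P Z : Matrix (Fin m × Fin n) (Fin m × Fin n) F)
    (hP : P = ∑ mo ∈ p.support,
        MvPolynomial.coeff mo p • ((Jm ^ (mo 0)) ⊗ₖ (Jn ^ (mo 1))))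
    (hZ : Z = P - MvPolynomial.eval (fun i : Fin 2 => if i = 0 then lam else mu) p • 1) :
    ∀ k : ℕ, m + n - 1 ≤ d * k → Z ^ k = 0 := by
  intro k hk
  set x : Fin 2 → F := fun i => if i = 0 then lam else mu
  simp only [hH, ← bivariateHasseDeriv_apply] at hlow
  set X := shiftMatrix m ⊗ₖ (1 : Matrix (Fin n) (Fin n) F)
  set Y := (1 : Matrix (Fin m) (Fin m) F) ⊗ₖ shiftMatrix n
  have hX : X ^ m = 0 := by simp [X, kronecker_one_pow, shiftMatrix_pow_self]
  have hY : Y ^ n = 0 := by simp [Y, one_kronecker_pow, shiftMatrix_pow_self]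
  have hPXY : P = bivariateEval p (x 0 • 1 + X) (x 1 • 1 + Y) := by
    rw [hP, hJm, hJn, jordanBlock_eq_smul_one_add_shiftMatrix,
      jordanBlock_eq_smul_one_add_shiftMatrix]
    simp only [pow_kronecker_pow, Matrix.add_kronecker, Matrix.kronecker_add, Matrix.smul_kronecker,
      Matrix.kronecker_smul, Matrix.one_kronecker_one]
    rfl
  have hZX : Z ∈ monomialFiltration F X Y d := by
    have h00 : eval x p = eval x (bivariateHasseDeriv 0 0 p) := by
      rw [bivariateHasseDeriv_zero_zero]
    rw [hZ, hPXY, bivariateEval_add_nilpotent hX hY, h00]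
    exact sum_smul_sub_mem_monomialFiltration hm hn _ hlow
  have hXY : Commute X Y := commute_kronecker_one_one_kronecker _ _
  have hZk := pow_mem_monomialFiltration hXY hZX k
  rwa [monomialFiltration_eq_bot hX hY hk, Submodule.mem_bot] at hZk

theorem nilpotency_index_bound_local_degree
    {F : Type*} [Field F] [CharZero F] {m n : ℕ} (hm : 0 < m) (hn : 0 < n)
    (lam mu : F) (p : MvPolynomial (Fin 2) F) (d : ℕ) (hd1 : 1 ≤ d)
    (H : ℕ → ℕ → MvPolynomial (Fin 2) F → MvPolynomial (Fin 2) F)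
    (hH : ∀ β γ q, H β γ q =
        ((β.factorial * γ.factorial : F))⁻¹ •
          ((fun r => pderiv (0 : Fin 2) r)^[β] ((fun r => pderiv (1 : Fin 2) r)^[γ] q)))
    (hlow : ∀ β γ : ℕ, 1 ≤ β + γ → β + γ < d →
        MvPolynomial.eval (fun i : Fin 2 => if i = 0 then lam else mu) (H β γ p) = 0)
    (hnz : ∃ β γ : ℕ, β + γ = d ∧
        MvPolynomial.eval (fun i : Fin 2 => if i = 0 then lam else mu) (H β γ p) ≠ 0)
    (Jm : Matrix (Fin m) (Fin m) F)
    (hJm : Jm = Matrix.of fun (i j : Fin m) =>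
        if i = j then lam else if (i : ℕ) + 1 = (j : ℕ) then 1 else 0)
    (Jn : Matrix (Fin n) (Fin n) F)
    (hJn : Jn = Matrix.of fun (i j : Fin n) =>
        if i = j then mu else if (i : ℕ) + 1 = (j : ℕ) then 1 else 0)
    (P Z : Matrix (Fin m × Fin n) (Fin m × Fin n) F)
    (hP : P = ∑ mo ∈ p.support,
        MvPolynomial.coeff mo p • ((Jm ^ (mo 0)) ⊗ₖ (Jn ^ (mo 1))))
    (hZ : Z = P - MvPolynomial.eval (fun i : Fin 2 => if i = 0 then lam else mu) p • 1) :
    ∀ k : ℕ, m + n - 1 ≤ d * k → Z ^ k = 0 :=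
  nilpotency_index_bound_local_degree_general hm hn lam mu p d H hH hlow Jm hJm Jn hJn P Z hP hZ
end

section
/- Let F be a field of characteristic 0, let p(x,y) = ∑ a_{ij} xⁱyʲ, let λ, μ ∈ F, and suppose the local degree of p at (λ,μ) satisfies d ≥ m + n − 1. Then P(J_m(λ), J_n(μ)) = p(λ,μ)·I_{mn}, i.e., its Jordan canonical form consists of mn blocks of size 1 with eigenvalue p(λ,μ). -/
/-!
Write `J_k(ν) = ν • 1 + N_k` with `N_k` the upper shift, so that `N_k ^ k = 0`. Expanding the
powers `J_m(λ) ^ i` and `J_n(μ) ^ j` binomially and collecting the Kronecker products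
`N_m ^ β ⊗ N_n ^ γ` gives the Taylor expansion
`P(J_m(λ), J_n(μ)) = ∑_{β < m, γ < n} (∂̂_{x^β y^γ} p)(λ, μ) • N_m ^ β ⊗ N_n ^ γ`.
Every term with `(β, γ) ≠ (0, 0)` has `1 ≤ β + γ ≤ m + n - 2 < d`, so only `p(λ, μ) • 1`
survives.
-/

open Kronecker MvPolynomial Finset
open scoped Nat

theorem smul_one_add_pow_eq_sum_of_pow_eq_zero {R A : Type*} [CommSemiring R] [Semiring A]
    [Algebra R A] (a : R) {N : A} {k : ℕ} (hN : N ^ k = 0) (i : ℕ) :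
    (a • 1 + N) ^ i = ∑ β ∈ range k, (i.choose β * a ^ (i - β)) • N ^ β := by
  have hterm (β : ℕ) :
      N ^ β * (a • 1) ^ (i - β) * i.choose β = (i.choose β * a ^ (i - β)) • N ^ β := by
    rw [smul_pow, one_pow, mul_smul_comm, mul_one, smul_mul_assoc, ← nsmul_eq_mul',
      ← Nat.cast_smul_eq_nsmul R, mul_smul, smul_comm]
  have hvanish (β : ℕ) (hβ : i < β ∨ k ≤ β) : (i.choose β * a ^ (i - β)) • N ^ β = 0 := by
    rcases hβ with hβ | hβ
    · rw [Nat.choose_eq_zero_of_lt hβ, Nat.cast_zero, zero_mul, zero_smul]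
    · rw [pow_eq_zero_of_le hβ hN, smul_zero]
  rw [add_comm, ((Commute.one_right N).smul_right a).add_pow]
  simp only [hterm]
  rw [← sum_subset (range_subset_range.2 (min_le_left (i + 1) k)) fun β hβ hβ' =>
      hvanish β (Or.inr (by simp only [mem_range] at hβ hβ'; omega)),
    sum_subset (range_subset_range.2 (min_le_right (i + 1) k)) fun β hβ hβ' =>
      hvanish β (Or.inl (by simp only [mem_range] at hβ hβ'; omega))]

namespace Matrix

def upperShift (R : Type*) [Zero R] [One R] (k : ℕ) : Matrix (Fin k) (Fin k) R :=
  of fun i j => if (i : ℕ) + 1 = j then 1 else 0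

theorem upperShift_pow_apply_eq_zero {R : Type*} [Semiring R] {k l : ℕ} {i j : Fin k}
    (h : (j : ℕ) < i + l) : (upperShift R k ^ l) i j = 0 := by
  induction l generalizing j with
  | zero => exact one_apply_ne (by rintro rfl; omega)
  | succ l ih =>
    rw [pow_succ, mul_apply]
    refine sum_eq_zero fun x _ => ?_
    by_cases hx : (x : ℕ) < i + l
    · rw [ih hx, zero_mul]
    · rw [upperShift, of_apply, if_neg (by omega), mul_zero]

theorem upperShift_pow_self (R : Type*) [Semiring R] (k : ℕ) : upperShift R k ^ k = 0 := by
  ext i j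
  exact upperShift_pow_apply_eq_zero (by omega)

theorem jordanBlock_eq_smul_one_add_upperShift {R : Type*} [Semiring R] (k : ℕ) (a : R) :
    (of fun i j : Fin k => if i = j then a else if (i : ℕ) + 1 = j then 1 else 0) =
      a • 1 + upperShift R k := by
  ext i j
  by_cases h : i = j
  · subst h
    simp [upperShift]
  · simp [upperShift, one_apply_ne h, h]

theorem sum_smul_kronecker_sum_smul {R ι κ l m n p : Type*} [CommSemiring R] (s : Finset ι)
    (t : Finset κ) (a : ι → R) (b : κ → R) (A : ι → Matrix l m R) (B : κ → Matrix n p R) :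
    (∑ i ∈ s, a i • A i) ⊗ₖ (∑ j ∈ t, b j • B j) =
      ∑ i ∈ s, ∑ j ∈ t, (a i * b j) • (A i ⊗ₖ B j) := by
  let K : Matrix l m R →ₗ[R] Matrix n p R →ₗ[R] Matrix (l × n) (m × p) R := kroneckerBilinear
  change K _ _ = ∑ i ∈ s, ∑ j ∈ t, (a i * b j) • K (A i) (B j)
  simp only [map_sum, LinearMap.sum_apply, map_smul, LinearMap.smul_apply, smul_sum, smul_smul]
  rw [sum_comm]
  simp only [mul_comm]

end Matrix

namespace MvPolynomial

theorem iterate_pderiv_monomial {R σ : Type*} [CommSemiring R] (i : σ) (β : ℕ) (s : σ →₀ ℕ)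
    (c : R) :
    (pderiv i)^[β] (monomial s c) =
      monomial (s - Finsupp.single i β) (c * (s i).descFactorial β) := by
  induction β generalizing s c with
  | zero => simp
  | succ β ih =>
    rw [Function.iterate_succ_apply', ih, pderiv_monomial, tsub_tsub, ← Finsupp.single_add,
      Finsupp.tsub_apply, Finsupp.single_eq_same, mul_assoc, ← Nat.cast_mul,
      mul_comm _ (s i - β), ← Nat.descFactorial_succ]

variable {F : Type*} [Field F]

/-- The Hasse derivative `∂̂_{x^β y^γ}` in the two variables `0 = x` and `1 = y`. -/
noncomputable def hasseDeriv₂ (β γ : ℕ) : MvPolynomial (Fin 2) F →ₗ[F] MvPolynomial (Fin 2) F :=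
  ((β ! * γ ! : F))⁻¹ • ((pderiv 0).toLinearMap ^ β * (pderiv 1).toLinearMap ^ γ)

theorem hasseDeriv₂_apply (β γ : ℕ) (q : MvPolynomial (Fin 2) F) :
    hasseDeriv₂ β γ q = ((β ! * γ ! : F))⁻¹ • (pderiv 0)^[β] ((pderiv 1)^[γ] q) := by
  simp [hasseDeriv₂, Module.End.pow_apply]

theorem hasseDeriv₂_zero_zero (q : MvPolynomial (Fin 2) F) : hasseDeriv₂ 0 0 q = q := by
  simp [hasseDeriv₂_apply]

variable [CharZero F]

theorem hasseDeriv₂_monomial (β γ : ℕ) (s : Fin 2 →₀ ℕ) (c : F) :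
    hasseDeriv₂ β γ (monomial s c) =
      monomial (s - Finsupp.single 1 γ - Finsupp.single 0 β)
        (c * (s 0).choose β * (s 1).choose γ) := by
  rw [hasseDeriv₂_apply, iterate_pderiv_monomial, iterate_pderiv_monomial, smul_monomial,
    Finsupp.tsub_apply, Finsupp.single_eq_of_ne zero_ne_one, Nat.sub_zero,
    Nat.descFactorial_eq_factorial_mul_choose, Nat.descFactorial_eq_factorial_mul_choose]
  congr 1
  have hfact : (β ! * γ ! : F) ≠ 0 := by simp [Nat.factorial_ne_zero]
  push_cast
  rw [smul_eq_mul, inv_mul_eq_iff_eq_mul₀ hfact]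
  ring

theorem eval_hasseDeriv₂ (β γ : ℕ) (x : Fin 2 → F) (p : MvPolynomial (Fin 2) F) :
    eval x (hasseDeriv₂ β γ p) = ∑ s ∈ p.support,
      coeff s p * (s 0).choose β * (s 1).choose γ * x 0 ^ (s 0 - β) * x 1 ^ (s 1 - γ) := by
  conv_lhs => rw [p.as_sum]
  simp only [map_sum, hasseDeriv₂_monomial, eval_monomial]
  refine sum_congr rfl fun s _ => ?_
  rw [Finsupp.prod_fintype _ _ fun _ => pow_zero _, Fin.prod_univ_two]
  simp only [Finsupp.tsub_apply, Finsupp.single_eq_same, Finsupp.single_eq_of_ne zero_ne_one,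
    Finsupp.single_eq_of_ne one_ne_zero, Nat.sub_zero]
  ring

theorem sum_coeff_smul_kronecker_pow_eq_sum_eval_hasseDeriv₂ {ι κ : Type*} [Fintype ι]
    [DecidableEq ι] [Fintype κ] [DecidableEq κ] (p : MvPolynomial (Fin 2) F) (x : Fin 2 → F)
    {M : Matrix ι ι F} {N : Matrix κ κ F} {m n : ℕ} (hM : M ^ m = 0) (hN : N ^ n = 0) :
    ∑ s ∈ p.support, coeff s p • (((x 0 • 1 + M) ^ s 0) ⊗ₖ ((x 1 • 1 + N) ^ s 1)) =
      ∑ β ∈ range m, ∑ γ ∈ range n, eval x (hasseDeriv₂ β γ p) • ((M ^ β) ⊗ₖ (N ^ γ)) := by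
  simp only [smul_one_add_pow_eq_sum_of_pow_eq_zero _ hM,
    smul_one_add_pow_eq_sum_of_pow_eq_zero _ hN, Matrix.sum_smul_kronecker_sum_smul, smul_sum,
    eval_hasseDeriv₂, sum_smul, smul_smul]
  rw [sum_comm]
  refine sum_congr rfl fun β _ => ?_
  rw [sum_comm]
  refine sum_congr rfl fun γ _ => sum_congr rfl fun s _ => ?_
  congr 1
  ring

end MvPolynomial

theorem scalar_matrix_when_local_degree_large_general
    {F : Type*} [Field F] [CharZero F] {m n : ℕ}
    (lam mu : F) (p : MvPolynomial (Fin 2) F) (d : ℕ)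
    (hd2 : m + n - 1 ≤ d)
    (H : ℕ → ℕ → MvPolynomial (Fin 2) F → MvPolynomial (Fin 2) F)
    (hH : ∀ β γ q, H β γ q =
        ((β.factorial * γ.factorial : F))⁻¹ •
          ((fun r => pderiv (0 : Fin 2) r)^[β] ((fun r => pderiv (1 : Fin 2) r)^[γ] q)))
    (hlow : ∀ β γ : ℕ, 1 ≤ β + γ → β + γ < d →
        MvPolynomial.eval (fun i : Fin 2 => if i = 0 then lam else mu) (H β γ p) = 0)
    (Jm : Matrix (Fin m) (Fin m) F)
    (hJm : Jm = Matrix.of fun (i j : Fin m) =>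
        if i = j then lam else if (i : ℕ) + 1 = (j : ℕ) then 1 else 0)
    (Jn : Matrix (Fin n) (Fin n) F)
    (hJn : Jn = Matrix.of fun (i j : Fin n) =>
        if i = j then mu else if (i : ℕ) + 1 = (j : ℕ) then 1 else 0)
    (P : Matrix (Fin m × Fin n) (Fin m × Fin n) F)
    (hP : P = ∑ mo ∈ p.support,
        MvPolynomial.coeff mo p • ((Jm ^ (mo 0)) ⊗ₖ (Jn ^ (mo 1)))) :
    P = MvPolynomial.eval (fun i : Fin 2 => if i = 0 then lam else mu) p • 1 := by
  set x : Fin 2 → F := fun i => if i = 0 then lam else mu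
  replace hlow (β γ : ℕ) (h₁ : 1 ≤ β + γ) (h₂ : β + γ < d) :
      eval x (hasseDeriv₂ β γ p) = 0 := by
    rw [hasseDeriv₂_apply, ← hH]
    exact hlow β γ h₁ h₂
  rw [hP, hJm, hJn, Matrix.jordanBlock_eq_smul_one_add_upperShift,
    Matrix.jordanBlock_eq_smul_one_add_upperShift,
    show lam = x 0 from rfl, show mu = x 1 from rfl,
    sum_coeff_smul_kronecker_pow_eq_sum_eval_hasseDeriv₂ p x (Matrix.upperShift_pow_self F m)
      (Matrix.upperShift_pow_self F n), ← sum_product']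
  refine (sum_eq_single (0, 0) ?_ ?_).trans ?_
  · rintro ⟨β, γ⟩ hβγ hne
    simp only [mem_product, mem_range] at hβγ
    simp only [ne_eq, Prod.mk.injEq, not_and] at hne
    rw [hlow β γ (by omega) (by omega), zero_smul]
  · intro h
    have : IsEmpty (Fin m × Fin n) := by
      simp only [mem_product, mem_range, not_and_or, not_lt, nonpos_iff_eq_zero] at h
      rcases h with rfl | rfl <;> infer_instance
    exact Subsingleton.elim _ _
  · rw [hasseDeriv₂_zero_zero, pow_zero, pow_zero, Matrix.one_kronecker_one]

theorem scalar_matrix_when_local_degree_large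
    {F : Type*} [Field F] [CharZero F] {m n : ℕ} (hm : 0 < m) (hn : 0 < n)
    (lam mu : F) (p : MvPolynomial (Fin 2) F) (d : ℕ) (hd1 : 1 ≤ d)
    (hd2 : m + n - 1 ≤ d)
    (H : ℕ → ℕ → MvPolynomial (Fin 2) F → MvPolynomial (Fin 2) F)
    (hH : ∀ β γ q, H β γ q =
        ((β.factorial * γ.factorial : F))⁻¹ •
          ((fun r => pderiv (0 : Fin 2) r)^[β] ((fun r => pderiv (1 : Fin 2) r)^[γ] q)))
    (hlow : ∀ β γ : ℕ, 1 ≤ β + γ → β + γ < d →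
        MvPolynomial.eval (fun i : Fin 2 => if i = 0 then lam else mu) (H β γ p) = 0)
    (hnz : ∃ β γ : ℕ, β + γ = d ∧
        MvPolynomial.eval (fun i : Fin 2 => if i = 0 then lam else mu) (H β γ p) ≠ 0)
    (Jm : Matrix (Fin m) (Fin m) F)
    (hJm : Jm = Matrix.of fun (i j : Fin m) =>
        if i = j then lam else if (i : ℕ) + 1 = (j : ℕ) then 1 else 0)
    (Jn : Matrix (Fin n) (Fin n) F)
    (hJn : Jn = Matrix.of fun (i j : Fin n) =>
        if i = j then mu else if (i : ℕ) + 1 = (j : ℕ) then 1 else 0)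
    (P : Matrix (Fin m × Fin n) (Fin m × Fin n) F)
    (hP : P = ∑ mo ∈ p.support,
        MvPolynomial.coeff mo p • ((Jm ^ (mo 0)) ⊗ₖ (Jn ^ (mo 1)))) :
    P = MvPolynomial.eval (fun i : Fin 2 => if i = 0 then lam else mu) p • 1 :=
  scalar_matrix_when_local_degree_large_general lam mu p d hd2 H hH hlow Jm hJm Jn hJn P hP
end

section
/- Let F be a field of characteristic 0 and let f ∈ F[w]. Let λ ∈ F, define φ(w) := f(w) − w·∂̂_w f(λ), and let p(x,y) = (f(x) − f(y))/(x − y). Let d denote the local degree of p at (λ,λ) and let m denote the multiplicity of λ as a root of ∂̂_w φ(w). Then d = m. -/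
open MvPolynomial Polynomial

/-!
Differentiating `(x - y) p = f x - f y` and restricting to the diagonal, where `x - y` vanishes,
gives `(s + 1) ∂ₓˢ p (λ, λ) = f⁽ˢ⁺¹⁾ λ` and
`(i + 1) ∂ₓⁱ ∂ᵧʲ⁺¹ p (λ, λ) = (j + 1) ∂ₓⁱ⁺¹ ∂ᵧʲ p (λ, λ)`.
In characteristic zero the second relation moves a nonvanishing derivative of order `d` to the
pure `x`-derivative of order `d`, so the local degree is the least `s ≥ 1` with `f⁽ˢ⁺¹⁾ λ ≠ 0`.
Since `φ' = f' - f' λ` vanishes at `λ` and has the same higher derivatives as `f'`, this is the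
multiplicity of `λ` as a root of `φ'`.
-/

namespace Derivation

variable {R A : Type*} [CommSemiring R] [CommSemiring A] [Algebra R A] (D : Derivation R A A)

theorem iterate_succ_map_mul_of_map_map_eq_zero {u : A} (hu : D (D u) = 0) (q : A) (n : ℕ) :
    D^[n + 1] (u * q) = u * D^[n + 1] q + (n + 1) • (D u * D^[n] q) := by
  induction n with
  | zero =>
    rw [zero_add, Function.iterate_one, Function.iterate_zero_apply, leibniz, one_smul,
      smul_eq_mul, smul_eq_mul, mul_comm q]
  | succ n ih =>
    rw [Function.iterate_succ_apply', ih, map_add, leibniz, map_nsmul, leibniz, hu,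
      Function.iterate_succ_apply' D (n + 1)]
    simp only [smul_eq_mul, Function.iterate_succ_apply']
    ring

theorem iterate_map_aeval_of_map_eq_one {a : A} (ha : D a = 1) (f : R[X]) (n : ℕ) :
    D^[n] (aeval a f) = aeval a (derivative^[n] f) := by
  induction n generalizing f with
  | zero => rfl
  | succ n ih => rw [Function.iterate_succ_apply, comp_aeval_eq, ha, smul_eq_mul, mul_one, ih]; rfl

theorem iterate_succ_map_aeval_of_map_eq_zero {a : A} (ha : D a = 0) (f : R[X]) (n : ℕ) :
    D^[n + 1] (aeval a f) = 0 := by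
  rw [Function.iterate_succ_apply, comp_aeval_eq, ha, smul_zero, iterate_map_zero]

end Derivation

theorem MvPolynomial.eval_aeval_X {R σ : Type*} [CommRing R] (x : σ → R) (j : σ) (g : R[X]) :
    MvPolynomial.eval x (Polynomial.aeval (X j : MvPolynomial σ R) g) = g.eval (x j) := by
  simp [Polynomial.aeval_def, Polynomial.eval₂_eq_sum_range, Polynomial.eval_eq_sum_range]

theorem Polynomial.rootMultiplicity_eq_of_isRoot_iterate_derivative {R : Type*} [CommRing R]
    [IsDomain R] [CharZero R] {g : R[X]} {t : R} {n : ℕ}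
    (hroot : ∀ m < n, (derivative^[m] g).IsRoot t)
    (hn : ¬ (derivative^[n] g).IsRoot t) : g.rootMultiplicity t = n := by
  have hg : g ≠ 0 := by rintro rfl; simp at hn
  refine le_antisymm (not_lt.mp fun h => hn (isRoot_iterate_derivative_of_lt_rootMultiplicity h)) ?_
  rcases n with _ | n
  · exact Nat.zero_le _
  · exact lt_rootMultiplicity_of_isRoot_iterate_derivative hg fun m hm => hroot m (by omega)

theorem MvPolynomial.eval_iterate_succ_pderiv_mul_of_eval_eq_zero {R σ : Type*} [CommRing R]
    (x : σ → R) (i : σ) {u : MvPolynomial σ R} {c : R} (hu : pderiv i u = C c)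
    (hux : MvPolynomial.eval x u = 0) (q : MvPolynomial σ R) (n : ℕ) :
    MvPolynomial.eval x ((pderiv i)^[n + 1] (u * q)) =
      (n + 1) * c * MvPolynomial.eval x ((pderiv i)^[n] q) := by
  rw [Derivation.iterate_succ_map_mul_of_map_map_eq_zero _ (by rw [hu, pderiv_C]), hu,
    map_add, map_mul, map_nsmul, map_mul, hux, eval_C, zero_mul, zero_add, nsmul_eq_mul]
  push_cast
  ring

section DividedDifference

variable {R : Type*} [CommRing R] {f : R[X]} {p : MvPolynomial (Fin 2) R}

noncomputable def diagPartial (t : R) (β γ : ℕ) (q : MvPolynomial (Fin 2) R) : R :=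
  MvPolynomial.eval (fun _ => t) ((pderiv 0)^[β] ((pderiv 1)^[γ] q))

theorem pderiv_zero_X_zero_sub_X_one :
    pderiv 0 (X 0 - X 1 : MvPolynomial (Fin 2) R) = MvPolynomial.C 1 := by
  simp

theorem pderiv_one_X_zero_sub_X_one :
    pderiv 1 (X 0 - X 1 : MvPolynomial (Fin 2) R) = MvPolynomial.C (-1) := by
  simp

variable (hp : (X 0 - X 1) * p = Polynomial.aeval (X 0) f - Polynomial.aeval (X 1) f)
include hp

theorem succ_mul_diagPartial_zero (t : R) (s : ℕ) :
    (s + 1 : R) * diagPartial t s 0 p = (derivative^[s + 1] f).eval t := by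
  have h := congrArg (fun q => MvPolynomial.eval (fun _ => t) ((pderiv 0)^[s + 1] q)) hp
  rw [eval_iterate_succ_pderiv_mul_of_eval_eq_zero _ _ pderiv_zero_X_zero_sub_X_one
      (by simp),
    iterate_map_sub, (pderiv 0).iterate_map_aeval_of_map_eq_one (pderiv_X_self 0),
    (pderiv 0).iterate_succ_map_aeval_of_map_eq_zero (pderiv_X_of_ne one_ne_zero), sub_zero,
    MvPolynomial.eval_aeval_X, mul_one] at h
  exact h

theorem succ_mul_diagPartial_succ (t : R) (i j : ℕ) :
    (i + 1 : R) * diagPartial t i (j + 1) p = (j + 1) * diagPartial t (i + 1) j p := by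
  have h := congrArg ((pderiv 1)^[j + 1]) hp
  rw [Derivation.iterate_succ_map_mul_of_map_map_eq_zero _
      (by rw [pderiv_one_X_zero_sub_X_one, pderiv_C]),
    iterate_map_sub, (pderiv 1).iterate_map_aeval_of_map_eq_one (pderiv_X_self 1),
    (pderiv 1).iterate_succ_map_aeval_of_map_eq_zero (pderiv_X_of_ne zero_ne_one), zero_sub,
    pderiv_one_X_zero_sub_X_one, MvPolynomial.C_neg, MvPolynomial.C_1, neg_one_mul, smul_neg,
    ← eq_sub_iff_add_eq, sub_neg_eq_add] at h
  have h' := congrArg (fun q => MvPolynomial.eval (fun _ => t) ((pderiv 0)^[i + 1] q)) h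
  rw [eval_iterate_succ_pderiv_mul_of_eval_eq_zero _ _ pderiv_zero_X_zero_sub_X_one
      (by simp),
    iterate_map_add, iterate_map_neg,
    (pderiv 0).iterate_succ_map_aeval_of_map_eq_zero (pderiv_X_of_ne one_ne_zero), neg_zero,
    zero_add, iterate_map_nsmul, map_nsmul, nsmul_eq_mul, mul_one] at h'
  push_cast at h'
  exact h'

theorem diagPartial_add_zero_ne_zero [IsDomain R] [CharZero R] (t : R) {β γ : ℕ}
    (h : diagPartial t β γ p ≠ 0) : diagPartial t (β + γ) 0 p ≠ 0 := by
  induction γ generalizing β with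
  | zero => exact h
  | succ γ ih =>
    have hswap := succ_mul_diagPartial_succ hp t β γ
    have hne : diagPartial t (β + 1) γ p ≠ 0 := fun h0 => by
      rw [h0, mul_zero] at hswap
      exact mul_ne_zero (Nat.cast_add_one_ne_zero β) h hswap
    simpa only [add_assoc, add_comm 1 γ] using ih hne

end DividedDifference

theorem local_degree_eq_root_multiplicity_general
    {F : Type*} [Field F] [CharZero F]
    (f : Polynomial F) (lam : F)
    (phi : Polynomial F)
    (hphi : phi = f - Polynomial.X * Polynomial.C (f.derivative.eval lam))
    (p : MvPolynomial (Fin 2) F)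
    (hp : (X 0 - X 1) * p =
        Polynomial.aeval (X 0 : MvPolynomial (Fin 2) F) f -
        Polynomial.aeval (X 1 : MvPolynomial (Fin 2) F) f)
    (H : ℕ → ℕ → MvPolynomial (Fin 2) F → MvPolynomial (Fin 2) F)
    (hH : ∀ β γ q, H β γ q =
        ((β.factorial * γ.factorial : F))⁻¹ •
          ((fun r => pderiv (0 : Fin 2) r)^[β] ((fun r => pderiv (1 : Fin 2) r)^[γ] q)))
    (d : ℕ) (hd1 : 1 ≤ d)
    (hlow : ∀ β γ : ℕ, 1 ≤ β + γ → β + γ < d →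
        MvPolynomial.eval (fun _ : Fin 2 => lam) (H β γ p) = 0)
    (hnz : ∃ β γ : ℕ, β + γ = d ∧
        MvPolynomial.eval (fun _ : Fin 2 => lam) (H β γ p) ≠ 0) :
    d = (Polynomial.derivative phi).rootMultiplicity lam := by
  have hH_eq_zero : ∀ β γ, MvPolynomial.eval (fun _ => lam) (H β γ p) = 0 ↔
      diagPartial lam β γ p = 0 := fun β γ => by
    rw [hH, MvPolynomial.smul_eval, mul_eq_zero, inv_eq_zero,
      or_iff_right (by simp [Nat.factorial_ne_zero])]
    rfl
  have hlow_f : ∀ s, 1 ≤ s → s < d → (derivative^[s + 1] f).eval lam = 0 := by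
    intro s h1 h2
    rw [← succ_mul_diagPartial_zero hp, (hH_eq_zero s 0).1 (hlow s 0 h1 h2), mul_zero]
  have htop_f : (derivative^[d + 1] f).eval lam ≠ 0 := by
    obtain ⟨β, γ, rfl, h⟩ := hnz
    rw [← succ_mul_diagPartial_zero hp]
    exact mul_ne_zero (Nat.cast_add_one_ne_zero _)
      (diagPartial_add_zero_ne_zero hp lam (mt (hH_eq_zero β γ).2 h))
  have hphi'' : ∀ m, derivative^[m + 1] (derivative phi) = derivative^[m + 2] f := fun m => by
    rw [Function.iterate_succ_apply, hphi]
    simp [derivative_mul]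
  obtain ⟨k, rfl⟩ : ∃ k, d = k + 1 := ⟨d - 1, by omega⟩
  refine (rootMultiplicity_eq_of_isRoot_iterate_derivative (fun m hm => ?_) ?_).symm
  · rcases m with _ | m
    · simp [hphi, derivative_mul]
    · rw [IsRoot, hphi'']
      exact hlow_f (m + 1) (by omega) hm
  · rw [IsRoot, hphi'']
    exact htop_f

theorem local_degree_eq_root_multiplicity
    {F : Type*} [Field F] [CharZero F]
    (f : Polynomial F) (lam : F)
    (phi : Polynomial F)
    (hphi : phi = f - Polynomial.X * Polynomial.C (f.derivative.eval lam))
    (p : MvPolynomial (Fin 2) F)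
    (hp : (X 0 - X 1) * p =
        Polynomial.aeval (X 0 : MvPolynomial (Fin 2) F) f -
        Polynomial.aeval (X 1 : MvPolynomial (Fin 2) F) f)
    (hpc : p.totalDegree ≠ 0)
    (H : ℕ → ℕ → MvPolynomial (Fin 2) F → MvPolynomial (Fin 2) F)
    (hH : ∀ β γ q, H β γ q =
        ((β.factorial * γ.factorial : F))⁻¹ •
          ((fun r => pderiv (0 : Fin 2) r)^[β] ((fun r => pderiv (1 : Fin 2) r)^[γ] q)))
    (d : ℕ) (hd1 : 1 ≤ d)
    (hlow : ∀ β γ : ℕ, 1 ≤ β + γ → β + γ < d →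
        MvPolynomial.eval (fun _ : Fin 2 => lam) (H β γ p) = 0)
    (hnz : ∃ β γ : ℕ, β + γ = d ∧
        MvPolynomial.eval (fun _ : Fin 2 => lam) (H β γ p) ≠ 0) :
    d = (Polynomial.derivative phi).rootMultiplicity lam :=
  local_degree_eq_root_multiplicity_general f lam phi hphi p hp H hH d hd1 hlow hnz
end

section
/- Let F be a field, λ ≠ μ elements of F, and f ∈ F[w]. Define φ(w) := f(w) − w·(f(λ) − f(μ))/(λ − μ) and p(x,y) := (f(x) − f(y))/(x − y). Then for Jordan blocks J_m(λ) and J_n(μ), the matrix identity (J_m(λ) ⊗ I_n − I_m ⊗ J_n(μ)) · (P(J_m(λ), J_n(μ)) − p(λ,μ) I_{mn}) = φ(J_m(λ)) ⊗ I_n − I_m ⊗ φ(J_n(μ)) holds. -/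
open Kronecker MvPolynomial Finset

/-- The algebra hom `M ↦ M ⊗ₖ 1`. -/
noncomputable def kronRightAlgHom (F : Type*) [Field F] (m n : ℕ) :
    Matrix (Fin m) (Fin m) F →ₐ[F] Matrix (Fin m × Fin n) (Fin m × Fin n) F where
  toFun M := M ⊗ₖ (1 : Matrix (Fin n) (Fin n) F)
  map_one' := Matrix.one_kronecker_one
  map_mul' A B := by rw [← Matrix.mul_kronecker_mul, Matrix.one_mul]
  map_zero' := Matrix.zero_kronecker _
  map_add' A B := Matrix.add_kronecker A B _
  commutes' r := by
    simp only [Algebra.algebraMap_eq_smul_one, Matrix.smul_kronecker,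
      Matrix.one_kronecker_one]

/-- The algebra hom `M ↦ 1 ⊗ₖ M`. -/
noncomputable def kronLeftAlgHom (F : Type*) [Field F] (m n : ℕ) :
    Matrix (Fin n) (Fin n) F →ₐ[F] Matrix (Fin m × Fin n) (Fin m × Fin n) F where
  toFun M := (1 : Matrix (Fin m) (Fin m) F) ⊗ₖ M
  map_one' := Matrix.one_kronecker_one
  map_mul' A B := by rw [← Matrix.mul_kronecker_mul, Matrix.one_mul]
  map_zero' := Matrix.kronecker_zero _
  map_add' A B := Matrix.kronecker_add _ A B
  commutes' r := by
    simp only [Algebra.algebraMap_eq_smul_one, Matrix.kronecker_smul,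
      Matrix.one_kronecker_one]

theorem commute_aeval_left {R S : Type*} [CommSemiring R] [Semiring S] [Algebra R S]
    {A B : S} (h : Commute A B) (q : Polynomial R) :
    Commute (Polynomial.aeval B q) A := by
  induction q using Polynomial.induction_on' with
  | add p q hp hq => simpa [map_add] using hp.add_left hq
  | monomial k c =>
    rw [Polynomial.aeval_monomial]
    exact (Algebra.commute_algebraMap_left c A).mul_left (h.symm.pow_left k)

/-- Evaluation of a bivariate polynomial at two commuting elements, as an algebra hom. -/
noncomputable def mvAevalComm (R : Type*) {S : Type*} [CommSemiring R] [Semiring S] [Algebra R S]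
    (A B : S) (h : Commute A B) : MvPolynomial (Fin 2) R →ₐ[R] S where
  toRingHom :=
    (Polynomial.eval₂RingHom' (Polynomial.aeval B).toRingHom A
        (commute_aeval_left h)).comp
      (MvPolynomial.aeval
          (![Polynomial.X, Polynomial.C Polynomial.X] :
            Fin 2 → Polynomial (Polynomial R))).toRingHom
  commutes' r := by
    simp [Polynomial.eval₂RingHom', MvPolynomial.algebraMap_eq,
      Polynomial.algebraMap_apply]

theorem mvAevalComm_X0 (R : Type*) {S : Type*} [CommSemiring R] [Semiring S] [Algebra R S]
    (A B : S) (h : Commute A B) : mvAevalComm R A B h (X 0) = A := by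
  simp [mvAevalComm, Polynomial.eval₂RingHom']

theorem mvAevalComm_X1 (R : Type*) {S : Type*} [CommSemiring R] [Semiring S] [Algebra R S]
    (A B : S) (h : Commute A B) : mvAevalComm R A B h (X 1) = B := by
  simp [mvAevalComm, Polynomial.eval₂RingHom']

theorem bezout_matrix_identity_distinct_eigenvalues
    {F : Type*} [Field F] {m n : ℕ}
    (lam mu : F) (hlm : lam ≠ mu)
    (f : Polynomial F) (phi : Polynomial F)
    (hphi : phi = f - Polynomial.X *
        Polynomial.C ((f.eval lam - f.eval mu) / (lam - mu)))
    (p : MvPolynomial (Fin 2) F)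
    (hp : (X 0 - X 1) * p =
        Polynomial.aeval (X 0 : MvPolynomial (Fin 2) F) f -
        Polynomial.aeval (X 1 : MvPolynomial (Fin 2) F) f)
    (Jm : Matrix (Fin m) (Fin m) F)
    (hJm : Jm = Matrix.of fun (i j : Fin m) =>
        if i = j then lam else if (i : ℕ) + 1 = (j : ℕ) then 1 else 0)
    (Jn : Matrix (Fin n) (Fin n) F)
    (hJn : Jn = Matrix.of fun (i j : Fin n) =>
        if i = j then mu else if (i : ℕ) + 1 = (j : ℕ) then 1 else 0)
    (P : Matrix (Fin m × Fin n) (Fin m × Fin n) F)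
    (hP : P = ∑ mo ∈ p.support,
        MvPolynomial.coeff mo p • ((Jm ^ (mo 0)) ⊗ₖ (Jn ^ (mo 1)))) :
    (Jm ⊗ₖ (1 : Matrix (Fin n) (Fin n) F) - (1 : Matrix (Fin m) (Fin m) F) ⊗ₖ Jn) *
        (P - MvPolynomial.eval (fun i : Fin 2 => if i = 0 then lam else mu) p • 1) =
      (Polynomial.aeval Jm phi) ⊗ₖ (1 : Matrix (Fin n) (Fin n) F) -
        (1 : Matrix (Fin m) (Fin m) F) ⊗ₖ (Polynomial.aeval Jn phi) := by
  set A : Matrix (Fin m × Fin n) (Fin m × Fin n) F :=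
    Jm ⊗ₖ (1 : Matrix (Fin n) (Fin n) F) with hA
  set B : Matrix (Fin m × Fin n) (Fin m × Fin n) F :=
    (1 : Matrix (Fin m) (Fin m) F) ⊗ₖ Jn with hB
  have hAB : Commute A B := by
    show A * B = B * A
    rw [hA, hB, ← Matrix.mul_kronecker_mul, ← Matrix.mul_kronecker_mul,
      Matrix.one_mul, Matrix.mul_one, Matrix.one_mul, Matrix.mul_one]
  -- how Φ acts on monomials
  have hmono : ∀ (mo : Fin 2 →₀ ℕ) (c : F),
      mvAevalComm F A B hAB (monomial mo c) = c • (A ^ (mo 0) * B ^ (mo 1)) := by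
    intro mo c
    have hm : (monomial mo c : MvPolynomial (Fin 2) F) =
        C c * X 0 ^ (mo 0) * X 1 ^ (mo 1) := by
      rw [monomial_eq, Finsupp.prod_pow, Fin.prod_univ_two, mul_assoc]
    rw [hm, map_mul, map_mul, map_pow, map_pow, mvAevalComm_X0, mvAevalComm_X1]
    rw [show (C c : MvPolynomial (Fin 2) F) = algebraMap F _ c from rfl,
      AlgHom.commutes, Algebra.smul_def, mul_assoc]
  -- Φ p = P
  have hΦp : mvAevalComm F A B hAB p = P := by
    conv_lhs => rw [p.as_sum]
    rw [map_sum, hP]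
    refine Finset.sum_congr rfl fun mo _ => ?_
    rw [hmono]
    congr 1
    rw [hA, hB,
      show (Jm ⊗ₖ (1 : Matrix (Fin n) (Fin n) F)) ^ (mo 0) = (Jm ^ (mo 0)) ⊗ₖ 1 from
        (map_pow (kronRightAlgHom F m n) Jm (mo 0)).symm,
      show ((1 : Matrix (Fin m) (Fin m) F) ⊗ₖ Jn) ^ (mo 1) = 1 ⊗ₖ (Jn ^ (mo 1)) from
        (map_pow (kronLeftAlgHom F m n) Jn (mo 1)).symm,
      ← Matrix.mul_kronecker_mul, Matrix.one_mul, Matrix.mul_one]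
  -- key identity
  have key : (A - B) * P = Polynomial.aeval A f - Polynomial.aeval B f := by
    have h := congrArg (mvAevalComm F A B hAB) hp
    simpa only [map_mul, map_sub, mvAevalComm_X0, mvAevalComm_X1, hΦp,
      ← Polynomial.aeval_algHom_apply (mvAevalComm F A B hAB)] using h
  -- the scalar
  set c : F := MvPolynomial.eval (fun i : Fin 2 => if i = 0 then lam else mu) p with hc
  have hcval : c = (f.eval lam - f.eval mu) / (lam - mu) := by
    set vv : Fin 2 → F := fun i : Fin 2 => if i = 0 then lam else mu with hvv
    have hcomp : (MvPolynomial.eval vv).comp (algebraMap F (MvPolynomial (Fin 2) F)) =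
        RingHom.id F := by
      ext x
      simp [MvPolynomial.algebraMap_eq]
    have := congrArg (MvPolynomial.eval vv) hp
    rw [map_mul, map_sub, map_sub, MvPolynomial.eval_X, MvPolynomial.eval_X,
      Polynomial.aeval_def, Polynomial.aeval_def, Polynomial.hom_eval₂,
      Polynomial.hom_eval₂, hcomp, MvPolynomial.eval_X, MvPolynomial.eval_X] at this
    have hv0 : vv 0 = lam := by simp [hvv]
    have hv1 : vv 1 = mu := by simp [hvv]
    rw [hv0, hv1] at this
    rw [hc, eq_div_iff (sub_ne_zero.mpr hlm), mul_comm]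
    exact this
  -- phi evaluations
  have hphiA : ∀ {S : Type _} [Ring S] [Algebra F S] (M : S),
      Polynomial.aeval M phi = Polynomial.aeval M f - c • M := by
    intro S _ _ M
    rw [hphi, map_sub, map_mul, Polynomial.aeval_X, Polynomial.aeval_C, hcval,
      ← Algebra.commutes, ← Algebra.smul_def]
  have hRA : (Polynomial.aeval Jm phi) ⊗ₖ (1 : Matrix (Fin n) (Fin n) F) =
      Polynomial.aeval A phi := by
    rw [hA]
    exact (Polynomial.aeval_algHom_apply (kronRightAlgHom F m n) Jm phi).symm
  have hRB : (1 : Matrix (Fin m) (Fin m) F) ⊗ₖ (Polynomial.aeval Jn phi) =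
      Polynomial.aeval B phi := by
    rw [hB]
    exact (Polynomial.aeval_algHom_apply (kronLeftAlgHom F m n) Jn phi).symm
  rw [hRA, hRB, hphiA A, hphiA B]
  rw [mul_sub, key, Matrix.mul_smul, Matrix.mul_one, smul_sub]
  abel
end
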